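/- arXiv:1410.0325 — 3 statements merged into one kernel-verified Lean document; each statement's English description precedes it below -/
import Mathlib

section
/- Let d ≥ 1 be an integer and let t_{-d} < t_{-d+1} < ⋯ < t_{2d+1} be strictly increasing real numbers. Then the (2d+1)×(2d+1) matrix M_0 with entries M_0(δ, γ) := Δ[t_{γ:γ+d+1}] p_{d+1+δ} (rows δ = 0, …, 2d, columns γ = -d, …, d) is invertible. -/
/-!
If `M₀ c = 0`, the functional `L = ∑_γ c_γ Δ[t_{γ:γ+d+1}]` annihilates `p_m` for every
`m ≤ 3d+1`: for `m ≤ d` because a divided difference on `d+2` nodes kills polynomials of degree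
`≤ d`, and for `m > d` because these are the entries of `M₀ c`. Since `L` only sees the values at
the `3d+2` nodes `t_{-d}, …, t_{2d+1}`, Lagrange interpolation shows `L = 0`. Evaluating `L` on the
indicator of `t_γ`, the left node of window `γ`, gives a lower triangular system with nonzero
diagonal for `c`, so `c = 0`.
-/

open MeasureTheory

/-- Divided difference `Δ[t_i, ..., t_j] h`, defined recursively:
`Δ[t_i] h = h (t i)` and
`Δ[t_{i:j}] h = (Δ[t_{i+1:j}] h - Δ[t_{i:j-1}] h) / (t j - t i)` for `i < j`. -/
noncomputable def dd (t : ℤ → ℝ) (h : ℝ → ℝ) (i j : ℤ) : ℝ :=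
  if _hij : i < j then
    (dd t h (i + 1) j - dd t h i (j - 1)) / (t j - t i)
  else h (t i)
termination_by (j - i).toNat
decreasing_by
  · omega
  · omega

open Finset Polynomial

theorem LinearMap.eq_zero_of_map_pow_eq_zero {F ι : Type*} [Field F] [DecidableEq ι]
    {s : Finset ι} {v : ι → F} (hv : Set.InjOn v s) {L : (F → F) →ₗ[F] F}
    (hL : ∀ f g : F → F, (∀ k ∈ s, f (v k) = g (v k)) → L f = L g)
    (hpow : ∀ m < #s, L (· ^ m) = 0) : L = 0 := by
  ext f
  set p := Lagrange.interpolate s v (fun k => f (v k))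
  have hdeg : p.degree < #s := Lagrange.degree_interpolate_lt _ hv
  have hp : (fun x => p.eval x) = ∑ m ∈ Finset.range (p.natDegree + 1), p.coeff m • (· ^ m) := by
    funext x
    simp [eval_eq_sum_range, Finset.sum_apply]
  have hnodes (k : ι) (hk : k ∈ s) : f (v k) = p.eval (v k) :=
    (Lagrange.eval_interpolate_at_node (fun k => f (v k)) hv hk).symm
  rw [hL f (fun x => p.eval x) hnodes, hp, map_sum, LinearMap.zero_apply]
  refine sum_eq_zero fun m _ => ?_
  rw [map_smul, smul_eq_mul]
  by_cases hm : m < #s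
  · rw [hpow m hm, mul_zero]
  · rw [coeff_eq_zero_of_degree_lt (hdeg.trans_le (by exact_mod_cast not_lt.1 hm)), zero_mul]

section DividedDifference

variable (t : ℤ → ℝ)

theorem dd_of_lt (f : ℝ → ℝ) {i j : ℤ} (hij : i < j) :
    dd t f i j = (dd t f (i + 1) j - dd t f i (j - 1)) / (t j - t i) := by
  rw [dd, dif_pos hij]

theorem dd_of_le (f : ℝ → ℝ) {i j : ℤ} (hji : j ≤ i) : dd t f i j = f (t i) := by
  rw [dd, dif_neg (not_lt.2 hji)]

theorem dd_add (f g : ℝ → ℝ) (i j : ℤ) : dd t (f + g) i j = dd t f i j + dd t g i j := by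
  rcases lt_or_ge i j with hij | hji
  · rw [dd_of_lt _ _ hij, dd_of_lt _ _ hij, dd_of_lt _ _ hij, dd_add f g (i + 1) j,
      dd_add f g i (j - 1)]
    ring
  · simp only [dd_of_le _ _ hji, Pi.add_apply]
termination_by (j - i).toNat
decreasing_by all_goals omega

theorem dd_smul (a : ℝ) (f : ℝ → ℝ) (i j : ℤ) : dd t (a • f) i j = a * dd t f i j := by
  rcases lt_or_ge i j with hij | hji
  · rw [dd_of_lt _ _ hij, dd_of_lt _ _ hij, dd_smul a f (i + 1) j, dd_smul a f i (j - 1)]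
    ring
  · simp only [dd_of_le _ _ hji, Pi.smul_apply, smul_eq_mul]
termination_by (j - i).toNat
decreasing_by all_goals omega

@[simps]
noncomputable def ddLinear (i j : ℤ) : (ℝ → ℝ) →ₗ[ℝ] ℝ where
  toFun f := dd t f i j
  map_add' f g := dd_add t f g i j
  map_smul' a f := dd_smul t a f i j

theorem dd_congr {f g : ℝ → ℝ} {i j : ℤ} (hij : i ≤ j)
    (hfg : ∀ k ∈ Set.Icc i j, f (t k) = g (t k)) : dd t f i j = dd t g i j := by
  rcases hij.lt_or_eq with hij | rfl
  · rw [dd_of_lt _ _ hij, dd_of_lt _ _ hij,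
      dd_congr (by omega) fun k hk => hfg k (Set.Icc_subset_Icc (by omega) le_rfl hk),
      dd_congr (by omega) fun k hk => hfg k (Set.Icc_subset_Icc le_rfl (by omega) hk)]
  · rw [dd_of_le _ _ le_rfl, dd_of_le _ _ le_rfl]
    exact hfg i ⟨le_rfl, le_rfl⟩
termination_by (j - i).toNat
decreasing_by all_goals omega

theorem dd_eq_zero {f : ℝ → ℝ} {i j : ℤ} (hij : i ≤ j) (hf : ∀ k ∈ Set.Icc i j, f (t k) = 0) :
    dd t f i j = 0 :=
  (dd_congr t (g := 0) hij hf).trans (map_zero (ddLinear t i j))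

theorem dd_const (c : ℝ) {i j : ℤ} (hij : i < j) : dd t (fun _ => c) i j = 0 := by
  rw [dd_of_lt _ _ hij]
  rcases lt_or_ge (i + 1) j with h | h
  · rw [dd_const c h, dd_const c (by omega : i < j - 1), sub_self, zero_div]
  · rw [dd_of_le _ _ h, dd_of_le _ _ (by omega : j - 1 ≤ i), sub_self, zero_div]
termination_by (j - i).toNat
decreasing_by all_goals omega

variable {t}

theorem dd_id_mul (f : ℝ → ℝ) {i j : ℤ} (hij : i < j) (ht : Set.InjOn t (Set.Icc i j)) :
    dd t (fun x => x * f x) i j = t j * dd t f i j + dd t f i (j - 1) := by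
  have hji : t j - t i ≠ 0 :=
    sub_ne_zero.2 (ht.ne ⟨by omega, le_rfl⟩ ⟨le_rfl, by omega⟩ (by omega))
  rcases lt_or_ge (i + 1) j with h | h
  · have hj1i : t (j - 1) - t i ≠ 0 :=
      sub_ne_zero.2 (ht.ne ⟨by omega, by omega⟩ ⟨le_rfl, by omega⟩ (by omega))
    rw [dd_of_lt _ _ hij, dd_id_mul f h (ht.mono (Set.Icc_subset_Icc (by omega) le_rfl)),
      dd_id_mul f (by omega : i < j - 1) (ht.mono (Set.Icc_subset_Icc le_rfl (by omega))),
      dd_of_lt t f hij, dd_of_lt t f (by omega : i < j - 1)]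
    field_simp
    ring
  · obtain rfl : j = i + 1 := by omega
    rw [dd_of_lt _ _ hij, dd_of_lt t f hij]
    simp only [dd_of_le _ _ le_rfl, dd_of_le _ _ (le_of_eq (add_sub_cancel_right i 1))]
    field_simp
    ring
termination_by (j - i).toNat
decreasing_by all_goals omega

theorem dd_pow_eq_zero {i j : ℤ} (ht : Set.InjOn t (Set.Icc i j)) {m : ℕ}
    (hm : (m : ℤ) < j - i) :
    dd t (· ^ m) i j = 0 := by
  induction m generalizing j with
  | zero => simpa using dd_const t 1 (by omega : i < j)
  | succ m ih =>
    have hij : i < j := by omega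
    simp_rw [pow_succ']
    rw [dd_id_mul _ hij ht, ih ht (by omega),
      ih (ht.mono (Set.Icc_subset_Icc le_rfl (by omega))) (by omega), mul_zero, add_zero]

theorem dd_ite_left_ne_zero {i j : ℤ} (hij : i ≤ j) (ht : Set.InjOn t (Set.Icc i j)) :
    dd t (fun x => if x = t i then 1 else 0) i j ≠ 0 := by
  rcases hij.lt_or_eq with hij | rfl
  · have hright : dd t (fun x => if x = t i then 1 else 0) (i + 1) j = 0 :=
      dd_eq_zero t (by omega) fun k hk =>
        if_neg (ht.ne ⟨by linarith [hk.1], hk.2⟩ ⟨le_rfl, hij.le⟩ (by linarith [hk.1]))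
    rw [dd_of_lt _ _ hij, hright, zero_sub, neg_div, neg_ne_zero]
    exact div_ne_zero
      (dd_ite_left_ne_zero (by omega) (ht.mono (Set.Icc_subset_Icc le_rfl (by omega))))
      (sub_ne_zero.2 (ht.ne ⟨by omega, le_rfl⟩ ⟨le_rfl, hij.le⟩ (by omega)))
  · simp [dd_of_le _ _ le_rfl]
termination_by (j - i).toNat
decreasing_by all_goals omega

end DividedDifference

theorem Icc_add_subset_Ico {a : ℤ} {N r γ : ℕ} (hγ : γ < N) :
    Set.Icc (a + γ) (a + γ + r) ⊆ Set.Ico a (a + N + r) := fun k hk => by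
  constructor <;> linarith [hk.1, hk.2, (by exact_mod_cast hγ : (γ : ℤ) < N)]

theorem eq_zero_of_sum_dd_pow_mul_eq_zero {t : ℤ → ℝ} {N r : ℕ} {a : ℤ}
    (ht : Set.InjOn t (Set.Ico a (a + N + r))) (c : Fin N → ℝ)
    (hc : ∀ m < N + r, ∑ γ : Fin N, dd t (· ^ m) (a + γ) (a + γ + r) * c γ = 0) : c = 0 := by
  classical
  set L := ∑ γ, c γ • ddLinear t (a + γ) (a + γ + r)
  have hL : L = 0 := by
    refine LinearMap.eq_zero_of_map_pow_eq_zero (s := Finset.Ico a (a + N + r)) (by simpa using ht)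
      (fun f g hfg => ?_) (fun m hm => ?_)
    · simp only [L, LinearMap.sum_apply, LinearMap.smul_apply, ddLinear_apply, smul_eq_mul]
      exact sum_congr rfl fun γ _ => congrArg _ <| dd_congr t (by omega) fun k hk =>
        hfg k (by simpa using Icc_add_subset_Ico γ.isLt hk)
    · simpa [L, mul_comm] using hc m (by simp only [Int.card_Ico] at hm; omega)
  set A : Matrix (Fin N) (Fin N) ℝ := Matrix.of fun γ γ' =>
    dd t (fun x => if x = t (a + γ) then 1 else 0) (a + γ') (a + γ' + r)
  have hA : A.det ≠ 0 := by
    rw [Matrix.det_of_isLowerTriangular A fun γ γ' hγ => ?_]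
    · exact prod_ne_zero_iff.2 fun γ _ =>
        dd_ite_left_ne_zero (by omega) (ht.mono (Icc_add_subset_Ico γ.isLt))
    · have hγ : (γ : ℤ) < γ' := by exact_mod_cast OrderDual.toDual_lt_toDual.1 hγ
      exact dd_eq_zero t (by omega) fun k hk =>
        if_neg (ht.ne (Icc_add_subset_Ico γ'.isLt hk)
          (Icc_add_subset_Ico γ.isLt ⟨le_rfl, by omega⟩) (by linarith [hk.1]))
  refine Matrix.eq_zero_of_mulVec_eq_zero hA (funext fun γ => ?_)
  have := LinearMap.congr_fun hL (fun x => if x = t (a + γ) then 1 else 0)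
  simpa [L, Matrix.mulVec, dotProduct, A, mul_comm] using this

theorem isUnit_dd_pow_matrix {t : ℤ → ℝ} {N r : ℕ} {a : ℤ}
    (ht : Set.InjOn t (Set.Ico a (a + N + r))) :
    IsUnit (Matrix.of fun δ γ : Fin N => dd t (· ^ (r + δ)) (a + γ) (a + γ + r)) := by
  rw [Matrix.isUnit_iff_isUnit_det, isUnit_iff_ne_zero, Ne, ← Matrix.exists_mulVec_eq_zero_iff]
  rintro ⟨c, hc0, hc⟩
  refine hc0 (eq_zero_of_sum_dd_pow_mul_eq_zero ht c fun m hm => ?_)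
  rcases lt_or_ge m r with hmr | hrm
  · exact sum_eq_zero fun γ _ => by
      rw [dd_pow_eq_zero (ht.mono (Icc_add_subset_Ico γ.isLt)) (by omega), zero_mul]
  · simpa [Matrix.mulVec, dotProduct, Nat.add_sub_cancel' hrm] using
      congrFun hc ⟨m - r, by omega⟩

theorem stmt1_general (d : ℕ) (t : ℤ → ℝ)
    (ht : ∀ i : ℤ, -(d : ℤ) ≤ i → i < 2 * d + 1 → t i < t (i + 1))
    (M : Matrix (Fin (2 * d + 1)) (Fin (2 * d + 1)) ℝ)
    (hM : ∀ δ γ : Fin (2 * d + 1),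
      M δ γ = dd t (fun u => u ^ (d + 1 + (δ : ℕ)))
        (((γ : ℕ) : ℤ) - d) ((((γ : ℕ) : ℤ) - d) + (d + 1))) :
    IsUnit M := by
  have hmono : StrictMonoOn t (Set.Icc (-(d : ℤ)) (2 * d + 1)) :=
    strictMonoOn_of_lt_succ Set.ordConnected_Icc fun i _ hi hi1 => by
      simpa using ht i hi.1 (by simpa using hi1.2)
  have hinj : Set.InjOn t (Set.Ico (-d) (-d + (2 * d + 1 : ℕ) + (d + 1 : ℕ))) :=
    hmono.injOn.mono fun k hk => by
      simp only [Set.mem_Ico, Set.mem_Icc] at hk ⊢; push_cast at hk; omega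
  convert isUnit_dd_pow_matrix hinj using 1
  ext δ γ
  rw [hM, Matrix.of_apply, neg_add_eq_sub]
  push_cast
  rfl

/-- The SIAC constraint matrix `M₀` with entries
`M₀(δ, γ) = Δ[t_{γ:γ+d+1}] (·)^{d+1+δ}` (rows `δ = 0..2d`, columns `γ = -d..d`)
is invertible. -/
theorem stmt1 (d : ℕ) (hd : 1 ≤ d) (t : ℤ → ℝ)
    (ht : ∀ i : ℤ, -(d : ℤ) ≤ i → i < 2 * d + 1 → t i < t (i + 1))
    (M : Matrix (Fin (2 * d + 1)) (Fin (2 * d + 1)) ℝ)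
    (hM : ∀ δ γ : Fin (2 * d + 1),
      M δ γ = dd t (fun u => u ^ (d + 1 + (δ : ℕ)))
        (((γ : ℕ) : ℤ) - d) ((((γ : ℕ) : ℤ) - d) + (d + 1))) :
    IsUnit M :=
  stmt1_general d t ht M hM
end

section
/- Let d ≥ 1 be an integer, σ := (d+1)/2 ∈ ℝ, and let M_0 be the (2d+1)×(2d+1) matrix with rows indexed by δ = 0, …, 2d and columns indexed by γ ∈ τ := {−d−σ, −d−σ+1, …, d−σ}, with entries M_0(δ, γ) := Δ[γ, γ+1, …, γ+d+1] p_{d+1+δ}. Then M_0 is invertible and the solution c = (c_γ)_{γ ∈ τ} of M_0 c = e_1 (where e_1 has 1 in the row δ = 0 and 0 elsewhere) is symmetric: c_γ = c_{−(d+1)−γ} for every γ ∈ τ. -/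
open MeasureTheory

open Polynomial

noncomputable def fdiff (P : ℝ[X]) : ℝ[X] := Polynomial.taylor 1 P - P

lemma fdiff_eval (P : ℝ[X]) (x : ℝ) : (fdiff P).eval x = P.eval (x + 1) - P.eval x := by
  simp [fdiff, Polynomial.taylor_eval]

lemma fdiff_coeff (P : ℝ[X]) (i : ℕ) (h : P.natDegree ≤ i + 1) :
    (fdiff P).coeff i = (i + 1) * P.coeff (i + 1) := by
  have hd : (Polynomial.hasseDeriv i P).natDegree < 2 := by
    have := Polynomial.natDegree_hasseDeriv_le P i
    omega
  rw [fdiff, Polynomial.coeff_sub, Polynomial.taylor_coeff,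
      Polynomial.eval_eq_sum_range' hd]
  simp only [Finset.sum_range_succ, Finset.sum_range_zero, Polynomial.hasseDeriv_coeff,
    Nat.add_comm 1 i, Nat.choose_succ_self_right, Nat.choose_self, one_pow, pow_zero, mul_one,
    Nat.cast_one, Nat.cast_add, zero_add]
  norm_cast
  ring

lemma fdiff_natDegree_le (P : ℝ[X]) (n : ℕ) (h : P.natDegree ≤ n + 1) :
    (fdiff P).natDegree ≤ n := by
  apply Polynomial.natDegree_le_iff_coeff_eq_zero.mpr
  intro i hi
  rw [fdiff_coeff P i (by omega),
    Polynomial.coeff_eq_zero_of_natDegree_lt (by omega)]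
  ring

lemma dd_shift (t : ℤ → ℝ) (h : ℝ → ℝ) : ∀ (k : ℕ) (i j : ℤ), (j - i).toNat ≤ k →
    dd t h (i + 1) (j + 1) = dd (fun m => t (m + 1)) h i j := by
  intro k
  induction k with
  | zero =>
    intro i j hk
    have h1 : ¬ i < j := by omega
    conv_rhs => rw [dd]
    conv_lhs => rw [dd]
    rw [dif_neg h1, dif_neg (by omega : ¬ i + 1 < j + 1)]
  | succ k ih =>
    intro i j hk
    by_cases hij : i < j
    · conv_rhs => rw [dd]
      conv_lhs => rw [dd]
      rw [dif_pos (by omega : i + 1 < j + 1), dif_pos hij]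
      rw [ih (i + 1) j (by omega), show j + 1 - 1 = (j - 1) + 1 by ring,
        ih i (j - 1) (by omega)]
    · conv_rhs => rw [dd]
      conv_lhs => rw [dd]
      rw [dif_neg hij, dif_neg (by omega : ¬ i + 1 < j + 1)]

lemma dd_fdiff : ∀ (j : ℕ) (x : ℝ) (P : ℝ[X]),
    dd (fun m : ℤ => x + m) (fun u => P.eval u) 0 (j : ℤ)
      = (fdiff^[j] P).eval x / j.factorial := by
  intro j
  induction j with
  | zero =>
    intro x P
    rw [dd, dif_neg (by omega)]
    simp
  | succ j ih =>
    intro x P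
    rw [show ((j + 1 : ℕ) : ℤ) = (j : ℤ) + 1 by push_cast; ring]
    rw [dd, dif_pos (by omega : (0:ℤ) < (j:ℤ) + 1)]
    have hs : dd (fun m : ℤ => x + m) (fun u => P.eval u) (0 + 1) ((j : ℤ) + 1)
        = dd (fun m : ℤ => (x + 1) + m) (fun u => P.eval u) 0 (j : ℤ) := by
      rw [dd_shift _ _ j 0 (j : ℤ) (by omega)]
      congr 1
      funext m
      push_cast
      ring
    rw [hs, ih, show (j : ℤ) + 1 - 1 = (j : ℤ) by ring, ih,
      Function.iterate_succ_apply', fdiff_eval]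
    have hj : (j.factorial : ℝ) ≠ 0 := by positivity
    have hj1 : ((j:ℝ) + 1) ≠ 0 := by positivity
    rw [Nat.factorial_succ]
    push_cast
    rw [show x + ((j:ℝ) + 1) - (x + 0) = (j:ℝ) + 1 by ring, div_sub_div_same, div_div,
      mul_comm (j.factorial : ℝ)]

lemma fdiff_iter_deg (k : ℕ) : ∀ j : ℕ, j ≤ k →
    (fdiff^[j] (Polynomial.X ^ k : ℝ[X])).natDegree ≤ k - j ∧
    (fdiff^[j] (Polynomial.X ^ k : ℝ[X])).coeff (k - j) = k.descFactorial j := by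
  intro j
  induction j with
  | zero =>
    intro _
    simp [Polynomial.natDegree_X_pow, Polynomial.coeff_X_pow]
  | succ j ih =>
    intro hj
    obtain ⟨h1, h2⟩ := ih (by omega)
    rw [Function.iterate_succ_apply']
    have hdeg : (fdiff^[j] (Polynomial.X ^ k : ℝ[X])).natDegree ≤ (k - (j + 1)) + 1 := by
      omega
    refine ⟨fdiff_natDegree_le _ _ hdeg, ?_⟩
    rw [fdiff_coeff _ _ hdeg, show k - (j + 1) + 1 = k - j by omega, h2,
      Nat.descFactorial_succ, Nat.cast_mul]
    congr 1
    norm_cast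
    omega

lemma fdiff_reflect (P : ℝ[X]) (a ε : ℝ) (h : ∀ x, P.eval (-a - x) = ε * P.eval x) :
    ∀ x, (fdiff P).eval (-(a + 1) - x) = -ε * (fdiff P).eval x := by
  intro x
  rw [fdiff_eval, fdiff_eval,
    show -(a + 1) - x + 1 = -a - x by ring,
    show -(a + 1) - x = -a - (x + 1) by ring, h x, h (x + 1)]
  ring

lemma fdiff_iter_reflect (k : ℕ) : ∀ (j : ℕ) (x : ℝ),
    (fdiff^[j] (Polynomial.X ^ k : ℝ[X])).eval (-(j : ℝ) - x)
      = (-1) ^ (j + k) * (fdiff^[j] (Polynomial.X ^ k : ℝ[X])).eval x := by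
  intro j
  induction j with
  | zero =>
    intro x
    simp only [Function.iterate_zero_apply, Polynomial.eval_pow, Polynomial.eval_X,
      Nat.cast_zero, zero_add]
    rw [show -(0:ℝ) - x = -x by ring, neg_pow]
  | succ j ih =>
    intro x
    rw [Function.iterate_succ_apply']
    have := fdiff_reflect (fdiff^[j] (Polynomial.X ^ k : ℝ[X])) j ((-1) ^ (j + k)) ih x
    rw [show (((j:ℕ) + 1 : ℕ) : ℝ) = (j : ℝ) + 1 by push_cast; ring, this,
      show j + 1 + k = (j + k) + 1 by omega, pow_succ]
    ring


/-- The uniform SIAC constraint matrix `M₀` (rows `δ = 0..2d`, columns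
`γ ∈ τ = {-d-σ, ..., d-σ}`, `σ = (d+1)/2`, with `M₀(δ,γ) = Δ[γ,...,γ+d+1] (·)^{d+1+δ}`)
is invertible, and the solution `c` of `M₀ c = e₁` is symmetric:
`c_γ = c_{-(d+1)-γ}` for every `γ ∈ τ` (columns `n` and `2d - n` carry symmetric values). -/
theorem stmt8 (d : ℕ) (hd : 1 ≤ d) (σ : ℝ) (hσ : σ = ((d : ℝ) + 1) / 2)
    (M : Matrix (Fin (2 * d + 1)) (Fin (2 * d + 1)) ℝ)
    (hM : ∀ (δ n : Fin (2 * d + 1)),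
      M δ n = dd (fun m : ℤ => (-(d : ℝ) - σ + (n : ℕ)) + m)
        (fun u => u ^ (d + 1 + (δ : ℕ))) 0 (d + 1))
    (e₁ : Fin (2 * d + 1) → ℝ) (he₁ : ∀ δ, e₁ δ = if δ = 0 then 1 else 0) :
    IsUnit M ∧
    ∀ c : Fin (2 * d + 1) → ℝ, M.mulVec c = e₁ →
      ∀ n : Fin (2 * d + 1), c n = c n.rev := by
  have hfac : (((d + 1).factorial : ℕ) : ℝ) ≠ 0 := by positivity
  set x : Fin (2 * d + 1) → ℝ := fun n => -(d : ℝ) - σ + (n : ℕ) with hxdef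
  set Q : ℕ → Polynomial ℝ := fun δ => fdiff^[d + 1] (Polynomial.X ^ (d + 1 + δ)) with hQdef
  have hMQ : ∀ δ n, M δ n = (Q (δ : ℕ)).eval (x n) / (d + 1).factorial := by
    intro δ n
    rw [hM δ n]
    have h0 := dd_fdiff (d + 1) (x n) (Polynomial.X ^ (d + 1 + (δ : ℕ)))
    simp only [Polynomial.eval_pow, Polynomial.eval_X] at h0
    rw [show ((d + 1 : ℕ) : ℤ) = (d : ℤ) + 1 by push_cast; ring] at h0
    exact h0
  have hdeg : ∀ δ : Fin (2 * d + 1), (Q (δ : ℕ)).natDegree ≤ (δ : ℕ) ∧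
      (Q (δ : ℕ)).coeff (δ : ℕ) = ((d + 1 + (δ : ℕ)).descFactorial (d + 1) : ℝ) := by
    intro δ
    have h := fdiff_iter_deg (d + 1 + (δ : ℕ)) (d + 1) (by omega)
    rwa [show d + 1 + (δ : ℕ) - (d + 1) = (δ : ℕ) by omega] at h
  have hxinj : Function.Injective x := by
    intro a b hab
    simp only [hxdef] at hab
    have : ((a : ℕ) : ℝ) = ((b : ℕ) : ℝ) := by linarith
    exact Fin.ext (Nat.cast_injective this)
  have hAB : M = (Matrix.of fun δ m : Fin (2 * d + 1) =>
      (Q (δ : ℕ)).coeff (m : ℕ) / ((d + 1).factorial : ℝ)) * (Matrix.vandermonde x).transpose := by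
    ext δ n
    rw [Matrix.mul_apply, hMQ δ n]
    have hlt : (Q (δ : ℕ)).natDegree < 2 * d + 1 := lt_of_le_of_lt (hdeg δ).1 δ.isLt
    rw [Polynomial.eval_eq_sum_range' hlt (x n), Finset.sum_div,
      ← Fin.sum_univ_eq_sum_range (fun i => (Q (δ : ℕ)).coeff i * x n ^ i / ((d + 1).factorial : ℝ))]
    refine Finset.sum_congr rfl fun m _ => ?_
    simp only [Matrix.transpose_apply, Matrix.vandermonde_apply, Matrix.of_apply]
    ring
  have hdet : M.det ≠ 0 := by
    rw [hAB, Matrix.det_mul]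
    apply mul_ne_zero
    · rw [Matrix.det_of_lowerTriangular _ ?_]
      · apply Finset.prod_ne_zero_iff.mpr
        intro δ _
        apply div_ne_zero _ hfac
        rw [(hdeg δ).2]
        rw [Nat.cast_ne_zero]
        intro h0
        rw [Nat.descFactorial_eq_zero_iff_lt] at h0
        omega
      · intro i j hij
        have hij' : i < j := by exact OrderDual.toDual_lt_toDual.mp hij
        have : (Q (i : ℕ)).coeff (j : ℕ) = 0 :=
          Polynomial.coeff_eq_zero_of_natDegree_lt
            (lt_of_le_of_lt (hdeg i).1 (by exact_mod_cast hij'))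
        simp [this]
    · rw [Matrix.det_transpose]
      exact Matrix.det_vandermonde_ne_zero_iff.mpr hxinj
  have hu : IsUnit M := (Matrix.isUnit_iff_isUnit_det M).mpr (isUnit_iff_ne_zero.mpr hdet)
  refine ⟨hu, ?_⟩
  have hrev : ∀ δ n, M δ n.rev = (-1 : ℝ) ^ (δ : ℕ) * M δ n := by
    intro δ n
    rw [hMQ, hMQ]
    have hxr : x n.rev = -((d : ℝ) + 1) - x n := by
      simp only [hxdef]
      have h1 : (n.rev : ℕ) = 2 * d - (n : ℕ) := by
        have := n.isLt
        simp [Fin.rev]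
      rw [h1]
      have h2 : ((2 * d - (n : ℕ) : ℕ) : ℝ) = 2 * (d : ℝ) - (n : ℕ) := by
        have := n.isLt
        push_cast [Nat.cast_sub (by omega : (n : ℕ) ≤ 2 * d)]
        ring
      rw [h2, hσ]
      ring
    rw [hxr]
    have hrf := fdiff_iter_reflect (d + 1 + (δ : ℕ)) (d + 1) (x n)
    rw [show (((d + 1 : ℕ)) : ℝ) = (d : ℝ) + 1 by push_cast; ring] at hrf
    rw [hrf, show (d + 1) + (d + 1 + (δ : ℕ)) = 2 * (d + 1) + (δ : ℕ) by omega,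
      pow_add, pow_mul, show ((-1:ℝ) ^ 2) = 1 by norm_num, one_pow, one_mul, mul_div_assoc]
  intro c hc
  have hinj : Function.Injective M.mulVec := Matrix.mulVec_injective_iff_isUnit.mpr hu
  have h2 : M.mulVec (fun i => c i.rev) = e₁ := by
    funext δ
    have hb : ∑ m : Fin (2 * d + 1), M δ m.rev * c m
        = ∑ m : Fin (2 * d + 1), M δ m * c m.rev := by
      refine Fintype.sum_bijective Fin.rev Fin.rev_bijective _ _ fun i => ?_
      rw [Fin.rev_rev]
    have : M.mulVec (fun i => c i.rev) δ
        = (-1 : ℝ) ^ (δ : ℕ) * M.mulVec c δ := by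
      simp only [Matrix.mulVec, dotProduct]
      rw [← hb, Finset.mul_sum]
      refine Finset.sum_congr rfl fun m _ => ?_
      rw [hrev δ m]
      ring
    rw [this, hc, he₁]
    by_cases hδ : δ = 0
    · simp [hδ]
    · simp [hδ]
  have h3 : (fun i => c i.rev) = c := hinj (h2.trans hc.symm)
  exact fun n => (congrFun h3 n).symm
end

section
/- Let d ≥ 1 be an integer, σ := (d+1)/2 ∈ ℝ, and let M_0 be the (2d+1)×(2d+1) matrix with rows indexed by δ = 0, …, 2d and columns indexed by γ ∈ τ := {−d−σ, −d−σ+1, …, d−σ}, with entries M_0(δ, γ) := Δ[γ, γ+1, …, γ+d+1] p_{d+1+δ}. Then M_0 is invertible and every entry of the solution c of M_0 c = e_1 (where e_1 has 1 in the row δ = 0 and 0 elsewhere) is a rational number. -/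
open MeasureTheory

open Finset Function Matrix

section aux

variable {R : Type*} [CommRing R]

lemma aux_fwdDiff_pow (p : ℕ) :
    fwdDiff (1:R) (fun x : R => x ^ p) = ∑ i ∈ range p, (p.choose i : R) • (fun x : R => x ^ i) := by
  funext x
  simp only [fwdDiff, Finset.sum_apply, Pi.smul_apply, smul_eq_mul]
  rw [add_pow]
  rw [Finset.sum_range_succ]
  simp [mul_comm]

lemma aux_fwdDiff_iter_pow_lt {k p : ℕ} (hpk : p < k) :
    (fwdDiff (1:R))^[k] (fun x : R => x ^ p) = 0 := by
  induction k generalizing p with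
  | zero => omega
  | succ k ih =>
    rw [Function.iterate_succ_apply, aux_fwdDiff_pow]
    rw [fwdDiff_iter_finset_sum]
    refine Finset.sum_eq_zero fun i hi => ?_
    rw [fwdDiff_iter_const_smul, ih (by simp at hi; omega)]
    simp

lemma aux_fwdDiff_iter_pow_self (k : ℕ) :
    (fwdDiff (1:R))^[k] (fun x : R => x ^ k) = fun _ => (k.factorial : R) := by
  induction k with
  | zero => simp
  | succ k ih =>
    rw [Function.iterate_succ_apply, aux_fwdDiff_pow, fwdDiff_iter_finset_sum,
      Finset.sum_range_succ]
    rw [Finset.sum_eq_zero (fun i hi => by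
      rw [fwdDiff_iter_const_smul, aux_fwdDiff_iter_pow_lt (by simpa using hi)]; simp)]
    rw [fwdDiff_iter_const_smul, ih]
    funext x
    simp [Nat.choose_succ_self_right, Nat.factorial_succ]
    try ring

lemma aux_fwdDiff_iter_comp_add (k : ℕ) (f : R → R) (a : R) :
    ∀ x, (fwdDiff (1:R))^[k] f (a + x) = (fwdDiff (1:R))^[k] (fun y => f (a + y)) x := by
  induction k with
  | zero => simp
  | succ k ih =>
    intro x
    rw [Function.iterate_succ_apply', Function.iterate_succ_apply']
    simp only [fwdDiff]
    rw [show a + x + 1 = a + (x + 1) by ring, ih, ih]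

lemma aux_fwdDiff_monomial_expand (k m : ℕ) (a : R) :
    (fwdDiff (1:R))^[k] (fun x : R => x ^ m) a =
      ∑ j ∈ range (m + 1),
        (m.choose j : R) * a ^ j * ((fwdDiff (1:R))^[k] (fun x : R => x ^ (m - j)) 0) := by
  have h2 : (fun y : R => (a + y) ^ m)
      = ∑ j ∈ range (m + 1), ((m.choose j : R) * a ^ j) • (fun x : R => x ^ (m - j)) := by
    funext y
    rw [add_pow]
    rw [Finset.sum_apply]
    refine Finset.sum_congr rfl fun j hj => ?_
    simp only [Pi.smul_apply, smul_eq_mul]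
    ring
  have h1 : (fwdDiff (1:R))^[k] (fun x : R => x ^ m) a
      = (fwdDiff (1:R))^[k] (fun y : R => (a + y) ^ m) 0 := by
    simpa using aux_fwdDiff_iter_comp_add k (fun x : R => x ^ m) a 0
  rw [h1, h2]
  rw [fwdDiff_iter_finset_sum]
  rw [Finset.sum_apply]
  refine Finset.sum_congr rfl fun j hj => ?_
  rw [fwdDiff_iter_const_smul]
  simp [mul_assoc]

end aux

lemma aux_dd_eq (h : ℝ → ℝ) (a : ℝ) (k : ℕ) :
    ∀ i : ℤ, dd (fun m : ℤ => a + m) h i (i + k) =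
      (fwdDiff (1:ℝ))^[k] h (a + i) / k.factorial := by
  induction k with
  | zero =>
    intro i
    rw [dd]
    simp
  | succ k ih =>
    intro i
    rw [dd, dif_pos (show i < i + ((k+1:ℕ):ℤ) by omega)]
    have e2 : (i + ((k+1:ℕ):ℤ) - 1 : ℤ) = i + (k:ℕ) := by push_cast; ring
    rw [e2]
    have e1 : (i + ((k+1:ℕ):ℤ) : ℤ) = (i+1) + (k:ℕ) := by push_cast; ring
    rw [e1]
    rw [ih (i+1), ih i]
    rw [Function.iterate_succ_apply']
    simp only [fwdDiff]
    have hden : (a + (((i+1:ℤ) + (k:ℕ) : ℤ) : ℝ)) - (a + (i:ℝ)) = (k:ℝ) + 1 := by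
      push_cast; ring
    rw [hden]
    have h3 : (a + (i:ℝ)) + 1 = a + ((i+1 : ℤ):ℝ) := by push_cast; ring
    rw [h3]
    rw [Nat.factorial_succ]
    rw [div_sub_div_same, div_div]
    push_cast
    ring

/-- The uniform SIAC constraint matrix `M₀` (rows `δ = 0..2d`, columns
`γ ∈ τ = {-d-σ, ..., d-σ}`, `σ = (d+1)/2`, with `M₀(δ,γ) = Δ[γ,...,γ+d+1] (·)^{d+1+δ}`)
is invertible, and every entry of the solution `c` of `M₀ c = e₁` is rational. -/
theorem stmt9 (d : ℕ) (hd : 1 ≤ d) (σ : ℝ) (hσ : σ = ((d : ℝ) + 1) / 2)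
    (M : Matrix (Fin (2 * d + 1)) (Fin (2 * d + 1)) ℝ)
    (hM : ∀ (δ n : Fin (2 * d + 1)),
      M δ n = dd (fun m : ℤ => (-(d : ℝ) - σ + (n : ℕ)) + m)
        (fun u => u ^ (d + 1 + (δ : ℕ))) 0 (d + 1))
    (e₁ : Fin (2 * d + 1) → ℝ) (he₁ : ∀ δ, e₁ δ = if δ = 0 then 1 else 0) :
    IsUnit M ∧
    ∀ c : Fin (2 * d + 1) → ℝ, M.mulVec c = e₁ →
      ∀ n : Fin (2 * d + 1), ∃ q : ℚ, c n = (q : ℝ) := by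
  classical
  set aq : Fin (2*d+1) → ℚ := fun n => -(d:ℚ) - ((d:ℚ)+1)/2 + (n:ℕ) with haq_def
  set tval : ℕ → ℚ := fun p => (fwdDiff (1:ℚ))^[d+1] (fun x : ℚ => x ^ p) 0 with htval_def
  set Lq : Matrix (Fin (2*d+1)) (Fin (2*d+1)) ℚ := fun δ j =>
    if (j:ℕ) ≤ (δ:ℕ) then
      ((d+1+(δ:ℕ)).choose (j:ℕ) : ℚ) * tval (d+1+(δ:ℕ) - (j:ℕ)) / ((d+1).factorial : ℚ)
    else 0 with hLq_def
  set Wq : Matrix (Fin (2*d+1)) (Fin (2*d+1)) ℚ := (Matrix.vandermonde aq)ᵀ with hWq_def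
  set Mq : Matrix (Fin (2*d+1)) (Fin (2*d+1)) ℚ := Lq * Wq with hMq_def
  have htv0 : ∀ p : ℕ, p < d + 1 → tval p = 0 := by
    intro p hp
    rw [htval_def]
    simp only [aux_fwdDiff_iter_pow_lt hp, Pi.zero_apply]
  have htvk : tval (d+1) = ((d+1).factorial : ℚ) := by
    rw [htval_def]
    simp only [aux_fwdDiff_iter_pow_self]
  have hfact : ((d+1).factorial : ℚ) ≠ 0 := Nat.cast_ne_zero.mpr (Nat.factorial_ne_zero _)
  -- entry formula for Mq
  have hMq : ∀ δ n : Fin (2*d+1), Mq δ n =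
      (∑ j ∈ Finset.range ((δ:ℕ)+1),
        ((d+1+(δ:ℕ)).choose j : ℚ) * aq n ^ j * tval (d+1+(δ:ℕ) - j))
        / ((d+1).factorial : ℚ) := by
    intro δ n
    have h1 : Mq δ n = ∑ j ∈ Finset.range (2*d+1),
        (if j ≤ (δ:ℕ) then
          ((d+1+(δ:ℕ)).choose j : ℚ) * tval (d+1+(δ:ℕ) - j) / ((d+1).factorial : ℚ)
        else 0) * aq n ^ j := by
      rw [hMq_def, Matrix.mul_apply,
        ← Fin.sum_univ_eq_sum_range (fun j => (if j ≤ (δ:ℕ) then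
          ((d+1+(δ:ℕ)).choose j : ℚ) * tval (d+1+(δ:ℕ) - j) / ((d+1).factorial : ℚ)
        else 0) * aq n ^ j) (2*d+1)]
      refine Finset.sum_congr rfl fun j _ => ?_
      rw [hLq_def, hWq_def]
      simp [Matrix.vandermonde]
    rw [h1, Finset.sum_div]
    rw [← Finset.sum_subset (Finset.range_subset_range.mpr (show (δ:ℕ)+1 ≤ 2*d+1 by omega))
      (fun j hj hj' => by
        rw [if_neg (by simp only [Finset.mem_range] at hj'; omega)]
        ring)]
    refine Finset.sum_congr rfl fun j hj => ?_
    rw [if_pos (by simp only [Finset.mem_range] at hj; omega)]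
    ring
  -- cast of tval
  have htval : ∀ p : ℕ, (fwdDiff (1:ℝ))^[d+1] (fun x : ℝ => x ^ p) 0 = ((tval p : ℚ) : ℝ) := by
    intro p
    have ht : tval p = (fwdDiff (1:ℚ))^[d+1] (fun x : ℚ => x ^ p) 0 := rfl
    rw [ht, fwdDiff_iter_eq_sum_shift, fwdDiff_iter_eq_sum_shift]
    push_cast
    refine Finset.sum_congr rfl fun s hs => ?_
    simp only [zsmul_eq_mul, smul_eq_mul, nsmul_eq_mul]
    push_cast
    ring
  -- entries of M are casts of entries of Mq
  have hmain : ∀ δ n, M δ n = ((Mq δ n : ℚ) : ℝ) := by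
    intro δ n
    rw [hM δ n]
    set aR : ℝ := -(d:ℝ) - σ + ((n:ℕ):ℝ) with haR
    have haq : aR = ((aq n : ℚ) : ℝ) := by
      rw [haR, haq_def, hσ]; push_cast; ring
    have hdd := aux_dd_eq (fun u : ℝ => u ^ (d+1+(δ:ℕ))) aR (d+1) 0
    rw [show ((0:ℤ) + ((d+1:ℕ):ℤ)) = ((d:ℤ)+1) by push_cast; ring] at hdd
    rw [hdd]
    rw [show aR + ((0:ℤ):ℝ) = aR by push_cast; ring]
    rw [aux_fwdDiff_monomial_expand (d+1) (d+1+(δ:ℕ)) aR]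
    simp only [htval]
    rw [haq, hMq δ n]
    push_cast
    rw [div_eq_div_iff (by positivity) (by positivity)]
    congr 1
    refine (Finset.sum_subset (Finset.range_subset_range.mpr (by omega)) fun j hj hj' => ?_).symm
    have h0 : tval (d + 1 + (δ:ℕ) - j) = 0 := by
      refine htv0 _ ?_
      simp only [Finset.mem_range] at hj hj'
      omega
    rw [h0]
    norm_num
  -- M is the cast of Mq
  have hMmap : M = Mq.map (Rat.cast : ℚ → ℝ) := by
    funext δ n
    rw [hmain δ n, Matrix.map_apply]
  -- determinant of Lq
  have hdetL : Lq.det ≠ 0 := by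
    rw [Matrix.det_of_lowerTriangular Lq (fun i j hij => by
      rw [hLq_def]
      exact if_neg (Nat.not_le.mpr (Fin.lt_def.mp (OrderDual.toDual_lt_toDual.mp hij))))]
    refine Finset.prod_ne_zero_iff.mpr fun i _ => ?_
    have : Lq i i = ((d+1+(i:ℕ)).choose (i:ℕ) : ℚ) := by
      rw [hLq_def]
      simp only [le_refl, if_pos]
      rw [show d+1+(i:ℕ) - (i:ℕ) = d+1 by omega, htvk]
      field_simp
    rw [this]
    have hpos : 0 < (d+1+(i:ℕ)).choose (i:ℕ) := Nat.choose_pos (by omega)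
    exact_mod_cast hpos.ne'
  -- determinant of Wq
  have hdetW : Wq.det ≠ 0 := by
    rw [hWq_def, Matrix.det_transpose]
    refine Matrix.det_vandermonde_ne_zero_iff.mpr fun n1 n2 h12 => ?_
    rw [haq_def] at h12
    simp only [add_right_inj] at h12
    have : ((n1:ℕ):ℚ) = ((n2:ℕ):ℚ) := by linarith [h12]
    exact Fin.ext (by exact_mod_cast this)
  have hdetMq : Mq.det ≠ 0 := by
    rw [hMq_def, Matrix.det_mul]
    exact mul_ne_zero hdetL hdetW
  have hdetM : M.det = ((Mq.det : ℚ) : ℝ) := by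
    rw [hMmap]
    rw [show Mq.map (Rat.cast : ℚ → ℝ) = (Rat.castHom ℝ).mapMatrix Mq from rfl]
    exact ((Rat.castHom ℝ).map_det Mq).symm
  have hunit : IsUnit M := by
    refine (Matrix.isUnit_iff_isUnit_det M).mpr (isUnit_iff_ne_zero.mpr ?_)
    rw [hdetM]
    exact_mod_cast hdetMq
  refine ⟨hunit, ?_⟩
  intro c hc n
  set e₁q : Fin (2*d+1) → ℚ := fun δ => if δ = 0 then 1 else 0 with he₁q_def
  set cq : Fin (2*d+1) → ℚ := Mq⁻¹.mulVec e₁q with hcq_def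
  have hMqdet : IsUnit Mq.det := isUnit_iff_ne_zero.mpr hdetMq
  have hsol : M.mulVec (fun i => (cq i : ℝ)) = e₁ := by
    rw [hMmap]
    have hmv : (Mq.map (Rat.cast : ℚ → ℝ)).mulVec (fun i => (cq i : ℝ))
        = fun i => ((Mq.mulVec cq i : ℚ) : ℝ) := by
      funext i
      simp only [Matrix.mulVec, dotProduct, Matrix.map_apply]
      push_cast
      rfl
    rw [hmv]
    have h2 : Mq.mulVec cq = e₁q := by
      rw [hcq_def, Matrix.mulVec_mulVec, Matrix.mul_nonsing_inv Mq hMqdet, Matrix.one_mulVec]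
    rw [h2]
    funext i
    rw [he₁ i, he₁q_def]
    by_cases hi : i = 0 <;> simp [hi]
  have hinj : Function.Injective M.mulVec := Matrix.mulVec_injective_iff_isUnit.mpr hunit
  have hceq : c = fun i => (cq i : ℝ) := hinj (by rw [hc, hsol])
  exact ⟨cq n, by rw [hceq]⟩
end
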